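/- Let X and Y be real Hilbert spaces, A : X → Y a bounded linear operator with adjoint A*, and ψ : X → ℝ a convex function. Let x̃ ∈ X, y⁰ = A x̃, and suppose A* w ∈ ∂ψ(x̃) for some w ∈ Y with w ≠ 0. Let δ > 0 and y^δ ∈ Y with ‖y^δ − y⁰‖ ≤ δ. If x_λ minimizes F(x) = ½‖y^δ − A x‖² + λ ψ(x) over X with the optimal parameter choice λ = δ/‖w‖, then ψ(x_λ) − ψ(x̃) − ⟨A* w, x_λ − x̃⟩ ≤ δ‖w‖. -/

import Mathlib

/-!
The minimizer `x_α` of the Tikhonov functional satisfies the first-order condition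
`⟪y - A x_α, A (x - x_α)⟫ ≤ α (ψ x - ψ x_α)`. Taking `x = x̃` and writing `r = y - A x_α`,
`d = y - A x̃`, this gives `α D ≤ ⟪r - α w, d - r⟫ = ⟪p, q - p⟫` for the Bregman distance `D`,
where `p = r - α w` and `q = d - α w`. Completing the square, `⟪p, q - p⟫ ≤ ‖q‖² / 4`, and
`‖q‖ ≤ δ + α ‖w‖`, so `D ≤ (δ + α ‖w‖)² / (4 α)`, which equals `δ ‖w‖` at `α = δ / ‖w‖`.
-/

open RealInnerProductSpace Set Filter Topology

section

variable {X Y : Type*} [NormedAddCommGroup X] [InnerProductSpace ℝ X]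
  [NormedAddCommGroup Y] [InnerProductSpace ℝ Y]

noncomputable def tikhonov (A : X →L[ℝ] Y) (ψ : X → ℝ) (y : Y) (α : ℝ) (x : X) : ℝ :=
  1 / 2 * ‖y - A x‖ ^ 2 + α * ψ x

def bregmanDist (ψ : X → ℝ) (u x₁ x₂ : X) : ℝ :=
  ψ x₁ - ψ x₂ - ⟪u, x₁ - x₂⟫

lemma le_of_forall_le_mul_add {a b c : ℝ} (h : ∀ t ∈ Ioc (0 : ℝ) 1, a ≤ t * c + b) : a ≤ b := by
  have hlim : Tendsto (fun t : ℝ => t * c + b) (𝓝[>] 0) (𝓝 b) := by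
    have hcont : Continuous fun t : ℝ => t * c + b := by fun_prop
    simpa using (hcont.tendsto 0).mono_left nhdsWithin_le_nhds
  exact ge_of_tendsto hlim (eventually_of_mem (Ioc_mem_nhdsGT one_pos) h)

lemma inner_sub_le_norm_sq_div_four (p q : Y) : ⟪p, q - p⟫ ≤ ‖q‖ ^ 2 / 4 := by
  have hsq : ‖q‖ ^ 2 / 4 - ⟪p, q - p⟫ = ‖p - (1 / 2 : ℝ) • q‖ ^ 2 := by
    rw [norm_sub_sq_real, inner_sub_right, real_inner_self_eq_norm_sq, real_inner_smul_right,
      norm_smul, Real.norm_of_nonneg (by norm_num : (0 : ℝ) ≤ 1 / 2)]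
    ring
  nlinarith [sq_nonneg ‖p - (1 / 2 : ℝ) • q‖]

lemma norm_sub_smul_sq (r v : Y) (t : ℝ) :
    ‖r - t • v‖ ^ 2 = ‖r‖ ^ 2 - 2 * t * ⟪r, v⟫ + t ^ 2 * ‖v‖ ^ 2 := by
  rw [norm_sub_sq_real, real_inner_smul_right, norm_smul, Real.norm_eq_abs, mul_pow, sq_abs]
  ring

/-- First-order optimality condition: `A* (y - A x_α) / α` is a subgradient of `ψ` at `x_α`. -/
lemma inner_residual_le_of_tikhonov_min {A : X →L[ℝ] Y} {ψ : X → ℝ} {y : Y} {α : ℝ} {xα : X}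
    (hψ : ConvexOn ℝ univ ψ) (hα : 0 ≤ α)
    (hmin : ∀ x, tikhonov A ψ y α xα ≤ tikhonov A ψ y α x) (x : X) :
    ⟪y - A xα, A (x - xα)⟫ ≤ α * (ψ x - ψ xα) := by
  set r := y - A xα
  set v := A (x - xα)
  refine le_of_forall_le_mul_add (c := ‖v‖ ^ 2 / 2) fun t ⟨ht0, ht1⟩ => ?_
  have hres : y - A (xα + t • (x - xα)) = r - t • v := by
    simp only [r, v, map_add, map_smul]
    abel
  have hconv : ψ (xα + t • (x - xα)) ≤ ψ xα + t * (ψ x - ψ xα) := by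
    have h := hψ.2 (mem_univ xα) (mem_univ x) (sub_nonneg.2 ht1) ht0.le (sub_add_cancel 1 t)
    have hpt : (1 - t) • xα + t • x = xα + t • (x - xα) := by
      rw [sub_smul, one_smul, smul_sub]
      abel
    rw [hpt, smul_eq_mul, smul_eq_mul] at h
    linarith
  have hstep := hmin (xα + t • (x - xα))
  simp only [tikhonov, hres, norm_sub_smul_sq] at hstep
  have hscaled : t * ⟪r, v⟫ ≤ t * (t * (‖v‖ ^ 2 / 2) + α * (ψ x - ψ xα)) := by
    nlinarith [mul_le_mul_of_nonneg_left hconv hα]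
  exact le_of_mul_le_mul_left hscaled ht0

end

section

variable {X Y : Type*} [NormedAddCommGroup X] [InnerProductSpace ℝ X] [CompleteSpace X]
  [NormedAddCommGroup Y] [InnerProductSpace ℝ Y] [CompleteSpace Y]

lemma bregmanDist_adjoint_le_of_tikhonov_min {A : X →L[ℝ] Y} {ψ : X → ℝ} {xt xα : X} {w y : Y}
    {α δ : ℝ} (hψ : ConvexOn ℝ univ ψ) (hα : 0 < α) (hnoise : ‖y - A xt‖ ≤ δ)
    (hmin : ∀ x, tikhonov A ψ y α xα ≤ tikhonov A ψ y α x) :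
    bregmanDist ψ (ContinuousLinearMap.adjoint A w) xα xt ≤ (δ + α * ‖w‖) ^ 2 / (4 * α) := by
  have hAd : A (xα - xt) = (y - A xt) - (y - A xα) := by
    rw [map_sub]
    abel
  have hopt := inner_residual_le_of_tikhonov_min hψ hα.le hmin xt
  rw [← neg_sub xα xt, map_neg, hAd, inner_neg_right] at hopt
  set r := y - A xα
  set d := y - A xt
  have hbreg : α * bregmanDist ψ (ContinuousLinearMap.adjoint A w) xα xt
      ≤ ⟪r - α • w, (d - α • w) - (r - α • w)⟫ := by
    rw [bregmanDist, ContinuousLinearMap.adjoint_inner_left, sub_sub_sub_cancel_right,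
      inner_sub_left, real_inner_smul_left, hAd]
    nlinarith
  have hq : ‖d - α • w‖ ≤ δ + α * ‖w‖ := by
    calc ‖d - α • w‖ ≤ ‖d‖ + ‖α • w‖ := norm_sub_le _ _
      _ = ‖d‖ + α * ‖w‖ := by rw [norm_smul, Real.norm_of_nonneg hα.le]
      _ ≤ δ + α * ‖w‖ := by gcongr
  rw [le_div_iff₀ (by positivity)]
  nlinarith [inner_sub_le_norm_sq_div_four (r - α • w) (d - α • w), norm_nonneg (d - α • w)]

end

theorem bregman_rate_optimal_lambda_general
    {X Y : Type*} [NormedAddCommGroup X] [InnerProductSpace ℝ X] [CompleteSpace X]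
    [NormedAddCommGroup Y] [InnerProductSpace ℝ Y] [CompleteSpace Y]
    (A : X →L[ℝ] Y) (ψ : X → ℝ) (hψ : ConvexOn ℝ Set.univ ψ)
    (xt : X) (w : Y) (hw : w ≠ 0)
    (δ : ℝ) (hδ : 0 < δ)
    (yδ : Y) (hnoise : ‖yδ - A xt‖ ≤ δ)
    (xl : X)
    (hmin : ∀ x : X,
      (1 / 2) * ‖yδ - A xl‖ ^ 2 + (δ / ‖w‖) * ψ xl ≤
        (1 / 2) * ‖yδ - A x‖ ^ 2 + (δ / ‖w‖) * ψ x) :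
    ψ xl - ψ xt - ⟪(ContinuousLinearMap.adjoint A) w, xl - xt⟫ ≤ δ * ‖w‖ := by
  have hw' : 0 < ‖w‖ := norm_pos_iff.2 hw
  have hrate := bregmanDist_adjoint_le_of_tikhonov_min (w := w) hψ (div_pos hδ hw') hnoise hmin
  have hopt : (δ + δ / ‖w‖ * ‖w‖) ^ 2 / (4 * (δ / ‖w‖)) = δ * ‖w‖ := by
    field_simp
    ring
  rwa [hopt] at hrate

/-- Optimal parameter choice `λ = δ/‖w‖`: the Bregman distance is bounded by `δ‖w‖`. -/
theorem bregman_rate_optimal_lambda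
    {X Y : Type*} [NormedAddCommGroup X] [InnerProductSpace ℝ X] [CompleteSpace X]
    [NormedAddCommGroup Y] [InnerProductSpace ℝ Y] [CompleteSpace Y]
    (A : X →L[ℝ] Y) (ψ : X → ℝ) (hψ : ConvexOn ℝ Set.univ ψ)
    (xt : X) (w : Y) (hw : w ≠ 0)
    (hSC : ∀ x : X, ψ x ≥ ψ xt + ⟪(ContinuousLinearMap.adjoint A) w, x - xt⟫)
    (δ : ℝ) (hδ : 0 < δ)
    (yδ : Y) (hnoise : ‖yδ - A xt‖ ≤ δ)
    (xl : X)
    (hmin : ∀ x : X,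
      (1 / 2) * ‖yδ - A xl‖ ^ 2 + (δ / ‖w‖) * ψ xl ≤
        (1 / 2) * ‖yδ - A x‖ ^ 2 + (δ / ‖w‖) * ψ x) :
    ψ xl - ψ xt - ⟪(ContinuousLinearMap.adjoint A) w, xl - xt⟫ ≤ δ * ‖w‖ :=
  bregman_rate_optimal_lambda_general A ψ hψ xt w hw δ hδ yδ hnoise xl hmin
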